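/- Let K/F be a cyclic Galois field extension with Gal(K/F) = ⟨σ⟩ of order n, and let f(t) = t^m − Σ_{i=0}^{m−1} a_i t^i ∈ F[t;σ] ⊂ K[t;σ] (all coefficients in F) be not invariant. Then ⟨H_{σ,1}⟩ = {H_{id,1}, H_{σ,1}, …, H_{σ^{n−1},1}} is a cyclic subgroup of Aut_F(S_f) isomorphic to ℤ/nℤ. If moreover n = m is prime, a_0 ≠ 0 and not all of a_1, …, a_{m−1} are zero, then Aut_F(S_f) = ⟨H_{σ,1}⟩ ≅ ℤ/mℤ. -/

import Mathlib

/-! ## The Petit algebra `S_f = K[t;σ]/K[t;σ]f`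

For a twisted polynomial ring `R = K[t;σ]` (multiplication determined by `t·a = σ(a)·t`)
and the monic skew polynomial `f(t) = t^m - Σ_{i<m} a_i t^i` (encoded by its coefficient
vector `a : Fin m → K`), the Petit algebra `S_f` is realised on coefficient vectors
`Fin m → K` (the polynomials of degree `< m`), with multiplication `g ∘ h = (gh) mod_r f`. -/

/-- The remainder of `t^s` after right division by `f(t) = t^m - Σ_{i<m} a_i t^i`:
for `s < m` it is `t^s` itself, and for `s ≥ m` one uses
`t^s ≡ Σ_i σ^{s-m}(a_i) t^{s-m+i} (mod R·f)`. -/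
noncomputable def tred {K : Type*} [Field K] (σ : K → K) (m : ℕ) (a : Fin m → K) (s : ℕ) :
    Fin m → K :=
  if _h : s < m then (fun i => if (i : ℕ) = s then (1 : K) else 0)
  else ∑ i : Fin m, σ^[s - m] (a i) • tred σ m a (s - m + (i : ℕ))
termination_by s
decreasing_by
  have hi := i.isLt
  omega

/-- The multiplication `g ∘ h = (gh) mod_r f` of the Petit algebra `S_f`. -/
noncomputable def pmul {K : Type*} [Field K] (σ : K → K) {m : ℕ} (a : Fin m → K)
    (x y : Fin m → K) : Fin m → K :=
  ∑ i : Fin m, ∑ j : Fin m, (x i * σ^[(i : ℕ)] (y j)) • tred σ m a ((i : ℕ) + (j : ℕ))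

/-- The unit element `1` of `S_f`. -/
noncomputable def pone (K : Type*) [Field K] (m : ℕ) : Fin m → K :=
  fun i => if (i : ℕ) = 0 then 1 else 0

/-- The element `t` of `S_f`. -/
noncomputable def tvec (K : Type*) [Field K] (m : ℕ) : Fin m → K :=
  fun i => if (i : ℕ) = 1 then 1 else 0

/-- The canonical copy of `c ∈ K` inside `S_f`. -/
noncomputable def iota (K : Type*) [Field K] (m : ℕ) (c : K) : Fin m → K :=
  fun i => if (i : ℕ) = 0 then c else 0

/-- `S_f` is associative; by Petit's theorem this holds if and only if `f` is
invariant (i.e. `R·f` is a two-sided ideal of `R = K[t;σ]`). -/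
def PAssoc {K : Type*} [Field K] (σ : K → K) {m : ℕ} (a : Fin m → K) : Prop :=
  ∀ x y z : Fin m → K, pmul σ a (pmul σ a x y) z = pmul σ a x (pmul σ a y z)

/-- `H` is an automorphism of the algebra `S_f` over `F = Fix(σ)`: an `F`-linear
bijection preserving the multiplication and the unit. -/
structure IsPetitAut {K : Type*} [Field K] (σ : K → K) {m : ℕ} (a : Fin m → K)
    (H : (Fin m → K) → (Fin m → K)) : Prop where
  bijective : Function.Bijective H
  map_add : ∀ x y, H (x + y) = H x + H y
  map_smul : ∀ c : K, σ c = c → ∀ x, H (c • x) = c • H x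
  map_mul : ∀ x y, H (pmul σ a x y) = pmul σ a (H x) (H y)
  map_one : H (pone K m) = pone K m

/-- `H` is an inner automorphism `x ↦ (c_l ∘ x) ∘ c` of `S_f`, where `c_l` is a
left inverse of `c`. -/
def IsInnerPetit {K : Type*} [Field K] (σ : K → K) {m : ℕ} (a : Fin m → K)
    (H : (Fin m → K) → (Fin m → K)) : Prop :=
  ∃ c cl : Fin m → K, pmul σ a cl c = pone K m ∧
    ∀ x, H x = pmul σ a (pmul σ a cl x) c

/-- The map `H_{τ,k} : Σ x_i t^i ↦ τ(x_0) + Σ_{i≥1} τ(x_i)·(Π_{l<i} σ^l(k))·t^i`. -/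
noncomputable def Hmap {K : Type*} [Field K] (σ τ : K → K) {m : ℕ} (k : K)
    (x : Fin m → K) : Fin m → K :=
  fun i => τ (x i) * ∏ l ∈ Finset.range (i : ℕ), σ^[l] k
section Aux
variable {K : Type*} [Field K]

/-- basis vector `t^s` -/
noncomputable def ev (K : Type*) [Field K] (m : ℕ) (s : ℕ) : Fin m → K :=
  fun i => if (i : ℕ) = s then 1 else 0

theorem tred_lt (σ : K → K) {m : ℕ} (a : Fin m → K) {s : ℕ} (h : s < m) :
    tred σ m a s = ev K m s := by
  rw [tred, dif_pos h]; rfl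

theorem tred_ge (σ : K → K) {m : ℕ} (a : Fin m → K) {s : ℕ} (h : ¬ s < m) :
    tred σ m a s = ∑ i : Fin m, σ^[s - m] (a i) • tred σ m a (s - m + (i : ℕ)) := by
  rw [tred, dif_neg h]

theorem sum_smul_ev {m : ℕ} (c : Fin m → K) :
    (∑ i : Fin m, c i • ev K m (i : ℕ)) = c := by
  funext k
  rw [Finset.sum_apply]
  simp only [ev, Pi.smul_apply, smul_eq_mul, Fin.val_eq_val]
  simp [eq_comm]

theorem tred_m (σ : K → K) {m : ℕ} (a : Fin m → K) : tred σ m a m = a := by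
  rw [tred_ge σ a (lt_irrefl m)]
  simp only [Nat.sub_self, Function.iterate_zero, id_eq, Nat.zero_add]
  have : ∀ i : Fin m, tred σ m a (i : ℕ) = ev K m (i : ℕ) := fun i => tred_lt σ a i.isLt
  simp only [this]
  exact sum_smul_ev a

theorem fin_sum_ite {β : Type*} [AddCommMonoid β] {m s : ℕ} (hs : s < m) (f : Fin m → β) :
    (∑ i : Fin m, if (i : ℕ) = s then f i else 0) = f ⟨s, hs⟩ := by
  rw [Finset.sum_eq_single ⟨s, hs⟩]
  · rw [if_pos rfl]
  · intro b _ hb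
    rw [if_neg (fun h => hb (Fin.ext h))]
  · intro h; exact absurd (Finset.mem_univ _) h

theorem ev_apply {m : ℕ} (s : ℕ) (i : Fin m) : ev K m s i = if (i : ℕ) = s then 1 else 0 := rfl

theorem iota_eq_smul_ev {m : ℕ} (c : K) : iota K m c = c • ev K m 0 := by
  funext i; simp [iota, ev, Pi.smul_apply]

theorem pone_eq_ev (m : ℕ) : pone K m = ev K m 0 := rfl

theorem tvec_eq_ev (m : ℕ) : tvec K m = ev K m 1 := rfl

end Aux
section Aux2
variable {F K : Type*} [Field F] [Field K] [Algebra F K]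

theorem coe_pow_eq_iterate (σ : K ≃ₐ[F] K) (l : ℕ) : ⇑(σ ^ l) = (⇑σ)^[l] := by
  induction l with
  | zero => simp [Function.iterate_zero]; rfl
  | succ n ih =>
    funext x
    rw [pow_succ', AlgEquiv.mul_apply, ih, Function.iterate_succ_apply']

variable (σ : K ≃ₐ[F] K) {m : ℕ} (a : Fin m → K)

theorem it_one (l : ℕ) : (⇑σ)^[l] (1 : K) = 1 := Function.iterate_fixed (map_one σ) l

theorem it_zero (l : ℕ) : (⇑σ)^[l] (0 : K) = 0 := Function.iterate_fixed (map_zero σ) l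

theorem it_mul (l : ℕ) (x y : K) : (⇑σ)^[l] (x * y) = (⇑σ)^[l] x * (⇑σ)^[l] y := by
  rw [← coe_pow_eq_iterate]; exact map_mul (σ ^ l) x y

theorem pmul_smul_left (c : K) (x y : Fin m → K) :
    pmul ⇑σ a (c • x) y = c • pmul ⇑σ a x y := by
  unfold pmul
  rw [Finset.smul_sum]
  refine Finset.sum_congr rfl fun i _ => ?_
  rw [Finset.smul_sum]
  refine Finset.sum_congr rfl fun j _ => ?_
  simp only [Pi.smul_apply, smul_eq_mul, smul_smul, mul_assoc]

theorem pmul_iota_left (hm : 0 < m) (c : K) (y : Fin m → K) :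
    pmul ⇑σ a (iota K m c) y = c • y := by
  unfold pmul
  have h1 : ∀ i : Fin m, ∀ j : Fin m, (iota K m c i * (⇑σ)^[(i:ℕ)] (y j)) • tred ⇑σ m a ((i:ℕ)+(j:ℕ))
      = if (i:ℕ) = 0 then (c * (⇑σ)^[(i:ℕ)] (y j)) • tred ⇑σ m a ((i:ℕ)+(j:ℕ)) else 0 := by
    intro i j
    simp only [iota]
    split <;> simp
  simp only [h1]
  rw [Finset.sum_comm]
  have h2 : ∀ j : Fin m, (∑ i : Fin m, if (i:ℕ) = 0 then (c * (⇑σ)^[(i:ℕ)] (y j)) • tred ⇑σ m a ((i:ℕ)+(j:ℕ)) else 0) = (c * y j) • tred ⇑σ m a (j:ℕ) := by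
    intro j
    rw [fin_sum_ite hm]
    simp
  simp only [h2]
  have h3 : ∀ j : Fin m, (c * y j) • tred ⇑σ m a (j:ℕ) = c • (y j • ev K m (j:ℕ)) := by
    intro j; rw [tred_lt _ _ j.isLt, mul_smul]
  simp only [h3]
  rw [← Finset.smul_sum, sum_smul_ev]

theorem pmul_iota_right (hm : 0 < m) (c : K) (x : Fin m → K) :
    pmul ⇑σ a x (iota K m c) = fun k => x k * (⇑σ)^[(k:ℕ)] c := by
  unfold pmul
  have h1 : ∀ i : Fin m, ∀ j : Fin m, (x i * (⇑σ)^[(i:ℕ)] (iota K m c j)) • tred ⇑σ m a ((i:ℕ)+(j:ℕ))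
      = if (j:ℕ) = 0 then (x i * (⇑σ)^[(i:ℕ)] c) • tred ⇑σ m a ((i:ℕ)+(j:ℕ)) else 0 := by
    intro i j
    simp only [iota]
    split <;> simp [it_zero]
  simp only [h1]
  have h2 : ∀ i : Fin m, (∑ j : Fin m, if (j:ℕ) = 0 then (x i * (⇑σ)^[(i:ℕ)] c) • tred ⇑σ m a ((i:ℕ)+(j:ℕ)) else 0) = (x i * (⇑σ)^[(i:ℕ)] c) • ev K m (i:ℕ) := by
    intro i
    rw [fin_sum_ite hm]
    simp [tred_lt _ _ i.isLt]
  simp only [h2]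
  exact sum_smul_ev _

/-- key expansion: multiply on the right by `d • t^s` -/
theorem pmul_smul_ev_right {s : ℕ} (hs : s < m) (d : K) (x : Fin m → K) :
    pmul ⇑σ a x (d • ev K m s)
      = ∑ i : Fin m, (x i * (⇑σ)^[(i:ℕ)] d) • tred ⇑σ m a ((i:ℕ) + s) := by
  unfold pmul
  have h1 : ∀ i : Fin m, ∀ j : Fin m, (x i * (⇑σ)^[(i:ℕ)] ((d • ev K m s) j)) • tred ⇑σ m a ((i:ℕ)+(j:ℕ))
      = if (j:ℕ) = s then (x i * (⇑σ)^[(i:ℕ)] d) • tred ⇑σ m a ((i:ℕ)+(j:ℕ)) else 0 := by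
    intro i j
    simp only [Pi.smul_apply, ev, smul_eq_mul]
    split <;> simp [it_zero]
  simp only [h1]
  refine Finset.sum_congr rfl fun i _ => ?_
  rw [fin_sum_ite hs]

theorem pmul_ev_right {s : ℕ} (hs : s < m) (x : Fin m → K) :
    pmul ⇑σ a x (ev K m s) = ∑ i : Fin m, x i • tred ⇑σ m a ((i:ℕ) + s) := by
  have : ev K m s = (1 : K) • ev K m s := by rw [one_smul]
  rw [this, pmul_smul_ev_right σ a hs]
  simp [it_one]

theorem pmul_smulev_smulev {r s : ℕ} (hr : r < m) (hs : s < m) (c d : K) :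
    pmul ⇑σ a (c • ev K m r) (d • ev K m s) = (c * (⇑σ)^[r] d) • tred ⇑σ m a (r + s) := by
  rw [pmul_smul_ev_right σ a hs]
  have h1 : ∀ i : Fin m, ((c • ev K m r) i * (⇑σ)^[(i:ℕ)] d) • tred ⇑σ m a ((i:ℕ) + s)
      = if (i:ℕ) = r then (c * (⇑σ)^[(i:ℕ)] d) • tred ⇑σ m a ((i:ℕ)+s) else 0 := by
    intro i
    simp only [Pi.smul_apply, ev, smul_eq_mul]
    split <;> simp
  simp only [h1]
  rw [fin_sum_ite hr]

theorem pmul_ev_ev {r s : ℕ} (hr : r < m) (hs : s < m) :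
    pmul ⇑σ a (ev K m r) (ev K m s) = tred ⇑σ m a (r + s) := by
  have h := pmul_smulev_smulev σ a hr hs 1 1
  simpa [it_one] using h

end Aux2
section Aux3
variable {F K : Type*} [Field F] [Field K] [Algebra F K]
variable (σ : K ≃ₐ[F] K) {m : ℕ} (a : Fin m → K)

theorem tred_fix (ha : ∀ i, σ (a i) = a i) (s : ℕ) (k : Fin m) :
    σ (tred ⇑σ m a s k) = tred ⇑σ m a s k := by
  induction s using Nat.strong_induction_on with
  | _ s IH =>
    by_cases h : s < m
    · rw [tred_lt _ _ h, ev_apply]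
      split <;> simp
    · rw [tred_ge _ _ h, Finset.sum_apply]
      rw [map_sum]
      refine Finset.sum_congr rfl fun i _ => ?_
      have hai : (⇑σ)^[s - m] (a i) = a i := Function.iterate_fixed (ha i) _
      have hlt : s - m + (i : ℕ) < s := by have := i.isLt; omega
      rw [Pi.smul_apply, smul_eq_mul, map_mul, hai, ha i, IH _ hlt]

theorem tred_fix_it (ha : ∀ i, σ (a i) = a i) (j s : ℕ) (k : Fin m) :
    (⇑σ)^[j] (tred ⇑σ m a s k) = tred ⇑σ m a s k :=
  Function.iterate_fixed (tred_fix σ a ha s k) j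

theorem pmul_map (ha : ∀ i, σ (a i) = a i) (j : ℕ) (x y : Fin m → K) :
    (fun k => (⇑σ)^[j] (pmul ⇑σ a x y k))
      = pmul ⇑σ a (fun i => (⇑σ)^[j] (x i)) (fun i => (⇑σ)^[j] (y i)) := by
  funext k
  unfold pmul
  rw [Finset.sum_apply, Finset.sum_apply, ← coe_pow_eq_iterate, map_sum]
  refine Finset.sum_congr rfl fun i _ => ?_
  rw [Finset.sum_apply, Finset.sum_apply, map_sum]
  refine Finset.sum_congr rfl fun p _ => ?_
  rw [Pi.smul_apply, Pi.smul_apply, smul_eq_mul, smul_eq_mul, map_mul, map_mul,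
    coe_pow_eq_iterate, tred_fix_it σ a ha]
  congr 1
  rw [← Function.iterate_add_apply, Nat.add_comm, Function.iterate_add_apply]

theorem Hmap_one (τ : K → K) :
    Hmap (⇑σ) τ (1 : K) = fun (x : Fin m → K) i => τ (x i) := by
  funext x i
  unfold Hmap
  simp [it_one]

theorem part1 (ha : ∀ i, σ (a i) = a i) (j : ℕ) :
    IsPetitAut (⇑σ) a (Hmap (⇑σ) (⇑(σ ^ j)) (1 : K)) := by
  rw [Hmap_one, coe_pow_eq_iterate]
  constructor
  · constructor
    · intro x y hxy
      funext i
      have := congrFun hxy i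
      rw [← coe_pow_eq_iterate] at this
      exact (σ ^ j).injective this
    · intro y
      refine ⟨fun i => (σ ^ j).symm (y i), ?_⟩
      funext i
      rw [← coe_pow_eq_iterate]
      exact (σ ^ j).apply_symm_apply _
  · intro x y
    funext i
    simp only [Pi.add_apply, ← coe_pow_eq_iterate, map_add]
  · intro c hc x
    funext i
    simp only [Pi.smul_apply, smul_eq_mul, ← coe_pow_eq_iterate, map_mul]
    congr 1
    rw [coe_pow_eq_iterate]
    exact Function.iterate_fixed hc j
  · intro x y
    rw [← pmul_map σ a ha j x y]
  · funext i
    simp only [pone]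
    split <;> simp [← coe_pow_eq_iterate]

end Aux3
section Aux4
variable {F K : Type*} [Field F] [Field K] [Algebra F K]
variable (σ : K ≃ₐ[F] K) {m : ℕ} (a : Fin m → K)

theorem it_m_eq_id (hord : orderOf σ = m) (c : K) : (⇑σ)^[m] c = c := by
  rw [← coe_pow_eq_iterate, ← hord, pow_orderOf_eq_one]; rfl

theorem exists_not_fixed (hord : orderOf σ = m) {p : ℕ} (hp0 : p ≠ 0) (hpm : p < m) :
    ∃ c : K, (⇑σ)^[p] c ≠ c := by
  by_contra hc
  push_neg at hc
  have : σ ^ p = 1 := by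
    ext c
    have := hc c
    rw [← coe_pow_eq_iterate] at this
    exact this
  have := orderOf_dvd_of_pow_eq_one this
  rw [hord] at this
  have := Nat.le_of_dvd (Nat.pos_of_ne_zero hp0) this
  omega

theorem pmul_ev_iota (hm : 0 < m) {s : ℕ} (hs : s < m) (c : K) :
    pmul ⇑σ a (ev K m s) (iota K m c) = (⇑σ)^[s] c • ev K m s := by
  rw [pmul_iota_right σ a hm]
  funext k
  simp only [ev, Pi.smul_apply, smul_eq_mul]
  by_cases h : (k : ℕ) = s
  · simp [h]
  · simp [h]

/-- elements of the left nucleus are scalars -/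
theorem lnuc_scalar (hm : 2 ≤ m) (hord : orderOf σ = m)
    (i₀ : Fin m) (hi₀ : (i₀ : ℕ) ≠ 0) (hai₀ : a i₀ ≠ 0) (x : Fin m → K)
    (hx : ∀ y z, pmul ⇑σ a (pmul ⇑σ a x y) z = pmul ⇑σ a x (pmul ⇑σ a y z)) :
    ∀ i : Fin m, (i : ℕ) ≠ 0 → x i = 0 := by
  classical
  by_contra hcon
  push_neg at hcon
  obtain ⟨iw, hiw0, hiwx⟩ := hcon
  set T : Finset (Fin m) := Finset.univ.filter (fun i => (i : ℕ) ≠ 0 ∧ x i ≠ 0) with hT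
  have hTne : T.Nonempty := ⟨iw, by simp [hT, hiw0, hiwx]⟩
  set istar := T.max' hTne with histar
  have histarT : istar ∈ T := T.max'_mem hTne
  have histar0 : (istar : ℕ) ≠ 0 := by simp [hT] at histarT; exact histarT.1
  have histarx : x istar ≠ 0 := by simp [hT] at histarT; exact histarT.2
  have hgt : ∀ i : Fin m, (istar : ℕ) < (i : ℕ) → x i = 0 := by
    intro i hi
    by_contra hxi
    have hiT : i ∈ T := by
      simp only [hT, Finset.mem_filter, Finset.mem_univ, true_and]
      exact ⟨by omega, hxi⟩
    have := T.le_max' i hiT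
    rw [← histar] at this
    exact absurd hi (by omega)
  set s := m - (istar : ℕ) with hsdef
  have histlt := istar.isLt
  have hs : s < m := by omega
  have hsum : (istar : ℕ) + s = m := by omega
  obtain ⟨c, hc⟩ := exists_not_fixed σ hord hi₀ i₀.isLt
  have hm0 : 0 < m := by omega
  -- the associator identity
  have hE := hx (ev K m s) (iota K m c)
  rw [pmul_ev_iota σ a hm0 hs c, pmul_ev_right σ a hs x, pmul_iota_right σ a hm0,
    pmul_smul_ev_right σ a hs] at hE
  have hE₀ := congrFun hE i₀
  rw [Finset.sum_apply, Finset.sum_apply] at hE₀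
  simp only [Pi.smul_apply, smul_eq_mul] at hE₀
  -- hE₀ : (∑ i, x i * tred (i+s) i₀) * σ^[i₀] c = ∑ i, (x i * σ^[i] (σ^[s] c)) * tred (i+s) i₀
  rw [Finset.sum_mul] at hE₀
  set f : Fin m → K := fun i => x i * tred (⇑σ) m a ((i : ℕ) + s) i₀ * (⇑σ)^[(i₀ : ℕ)] c with hf
  set g : Fin m → K := fun i => x i * (⇑σ)^[(i : ℕ)] ((⇑σ)^[s] c) * tred (⇑σ) m a ((i : ℕ) + s) i₀ with hg
  have hfg : ∀ i : Fin m, i ≠ istar → f i = g i := by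
    intro i hi
    rcases lt_or_gt_of_ne (fun h : (i:ℕ) = (istar:ℕ) => hi (Fin.ext h)) with hlt | hgt'
    · -- i < istar
      have hilt : (i : ℕ) + s < m := by omega
      simp only [hf, hg]
      rw [tred_lt _ _ hilt, ev_apply]
      by_cases hcase : (i₀ : ℕ) = (i : ℕ) + s
      · rw [if_pos hcase, mul_one, mul_one, ← Function.iterate_add_apply, hcase]
      · rw [if_neg hcase, mul_zero, zero_mul, mul_zero]
    · simp only [hf, hg]
      rw [hgt i hgt', zero_mul, zero_mul, zero_mul, zero_mul]
  have hsum_f : ∑ i : Fin m, f i = f istar + ∑ i ∈ Finset.univ.erase istar, f i :=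
    (Finset.add_sum_erase Finset.univ f (Finset.mem_univ istar)).symm
  have hsum_g : ∑ i : Fin m, g i = g istar + ∑ i ∈ Finset.univ.erase istar, g i :=
    (Finset.add_sum_erase Finset.univ g (Finset.mem_univ istar)).symm
  have herase : ∑ i ∈ Finset.univ.erase istar, f i = ∑ i ∈ Finset.univ.erase istar, g i :=
    Finset.sum_congr rfl fun i hi => hfg i (Finset.ne_of_mem_erase hi)
  have hstar : f istar = g istar := by
    have heq : ∑ i : Fin m, f i = ∑ i : Fin m, g i := hE₀
    rw [hsum_f, hsum_g, herase] at heq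
    exact add_right_cancel heq
  simp only [hf, hg] at hstar
  rw [hsum, tred_m, ← Function.iterate_add_apply, hsum, it_m_eq_id σ hord] at hstar
  -- hstar : x istar * a i₀ * σ^[i₀] c = x istar * c * a i₀
  have h1 : x istar * a i₀ ≠ 0 := mul_ne_zero histarx hai₀
  have h2 : x istar * a i₀ * (⇑σ)^[(i₀ : ℕ)] c = x istar * a i₀ * c := by
    rw [hstar]; ring
  exact hc (mul_left_cancel₀ h1 h2)

end Aux4
section Aux5
variable {F K : Type*} [Field F] [Field K] [Algebra F K]
variable (σ : K ≃ₐ[F] K) {m : ℕ} (a : Fin m → K)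

theorem prod_shift (k : K) (p : ℕ) :
    k * σ (∏ l ∈ Finset.range p, (⇑σ)^[l] k) = ∏ l ∈ Finset.range (p+1), (⇑σ)^[l] k := by
  rw [Finset.prod_range_succ', map_prod, mul_comm]
  congr 1
  refine Finset.prod_congr rfl fun l _ => ?_
  rw [Function.iterate_succ_apply']

theorem classify [FiniteDimensional F K] (hm : 2 ≤ m)
    (ha : ∀ i, σ (a i) = a i)
    (hord : orderOf σ = m) (hprime : Nat.Prime m)
    (hgen : ∀ τ : K ≃ₐ[F] K, ∃ j : ℕ, τ = σ ^ j)
    (ha0 : a ⟨0, Nat.lt_of_lt_of_le Nat.zero_lt_two hm⟩ ≠ 0) (i₀ : Fin m) (hi₀ : (i₀ : ℕ) ≠ 0) (hai₀ : a i₀ ≠ 0)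
    (H : (Fin m → K) → (Fin m → K)) (hH : IsPetitAut (⇑σ) a H) :
    ∃ j : ℕ, H = Hmap (⇑σ) (⇑(σ ^ j)) (1 : K) := by
  classical
  have hm0 : 0 < m := by omega
  have h1m : 1 < m := by omega
  obtain ⟨hbij, hadd, hsmul, hmul, hone⟩ := hH
  have H0 : H 0 = 0 := by
    have h := hadd 0 0
    rw [add_zero] at h
    exact (left_eq_add.mp h)
  have Hsum : ∀ (f : Fin m → (Fin m → K)), H (∑ s : Fin m, f s) = ∑ s : Fin m, H (f s) :=
    fun f => map_sum (AddMonoidHom.mk' H hadd) f Finset.univ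
  -- Step A : H preserves the copy of K
  have hnuc : ∀ c : K, ∀ i : Fin m, (i : ℕ) ≠ 0 → H (iota K m c) i = 0 := by
    intro c
    apply lnuc_scalar σ a hm hord i₀ hi₀ hai₀
    intro y z
    obtain ⟨y', hy'⟩ := hbij.2 y
    obtain ⟨z', hz'⟩ := hbij.2 z
    rw [← hy', ← hz', ← hmul, ← hmul, ← hmul, ← hmul]
    congr 1
    rw [pmul_iota_left σ a hm0, pmul_iota_left σ a hm0, pmul_smul_left]
  set τ : K → K := fun c => H (iota K m c) ⟨0, hm0⟩ with hτdef
  have hHiota : ∀ c, H (iota K m c) = iota K m (τ c) := by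
    intro c
    funext i
    by_cases h : (i : ℕ) = 0
    · have hi : i = ⟨0, hm0⟩ := Fin.ext h
      rw [hi]
      simp [hτdef, iota]
    · rw [hnuc c i h]
      simp [iota, h]
  have hiota_inj : ∀ c d : K, iota K m c = iota K m d → c = d := by
    intro c d h
    have := congrFun h ⟨0, hm0⟩
    simpa [iota] using this
  have hiotamul : ∀ c d : K, pmul ⇑σ a (iota K m c) (iota K m d) = iota K m (c * d) := by
    intro c d
    rw [pmul_iota_left σ a hm0]
    funext i
    simp [iota, mul_ite]
  have hiotaadd : ∀ c d : K, iota K m (c + d) = iota K m c + iota K m d := by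
    intro c d
    funext i
    by_cases h : (i : ℕ) = 0 <;> simp [iota, h]
  have hiota1 : iota K m (1 : K) = pone K m := rfl
  have hτmul : ∀ c d, τ (c * d) = τ c * τ d := by
    intro c d
    apply hiota_inj
    rw [← hHiota, ← hiotamul, hmul, hHiota, hHiota, hiotamul]
  have hτadd : ∀ c d, τ (c + d) = τ c + τ d := by
    intro c d
    apply hiota_inj
    rw [← hHiota, hiotaadd, hadd, hHiota, hHiota, ← hiotaadd]
  have hτ1 : τ 1 = 1 := by
    apply hiota_inj
    rw [← hHiota, hiota1, hone]
  have hiotasmul : ∀ c : K, iota K m c = c • pone K m := by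
    intro c
    funext i
    by_cases h : (i : ℕ) = 0 <;> simp [iota, pone, h]
  have hτfix : ∀ c, σ c = c → τ c = c := by
    intro c hc
    apply hiota_inj
    rw [← hHiota, hiotasmul, hsmul c hc, hone, ← hiotasmul]
  have hτ0 : τ 0 = 0 := hτfix 0 (map_zero σ)
  let τalg : K →ₐ[F] K :=
    { toFun := τ, map_one' := hτ1, map_mul' := hτmul, map_zero' := hτ0,
      map_add' := hτadd, commutes' := fun r => hτfix _ (σ.commutes r) }
  have hτinj : Function.Injective τ := τalg.toRingHom.injective
  have hτsurj : Function.Surjective τ :=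
    (LinearMap.injective_iff_surjective (f := τalg.toLinearMap)).mp hτinj
  obtain ⟨j, hj⟩ := hgen (AlgEquiv.ofBijective τalg ⟨hτinj, hτsurj⟩)
  have hτj : τ = ⇑(σ ^ j) := by rw [← hj]; rfl
  have hτit : τ = (⇑σ)^[j] := by rw [hτj, coe_pow_eq_iterate]
  have hcomm : ∀ c, τ (σ c) = σ (τ c) := by
    intro c
    rw [hτit, ← Function.iterate_succ_apply, Function.iterate_succ_apply']
  -- Step B : H t = k₀ t
  have hw : ∀ d : K, (fun k : Fin m => H (ev K m 1) k * (⇑σ)^[(k : ℕ)] d) = σ d • H (ev K m 1) := by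
    intro d
    obtain ⟨c, hc⟩ := hτsurj d
    have e1 : pmul ⇑σ a (ev K m 1) (iota K m c) = pmul ⇑σ a (iota K m (σ c)) (ev K m 1) := by
      rw [pmul_ev_iota σ a hm0 h1m, pmul_iota_left σ a hm0, Function.iterate_one]
    have e2 := congrArg H e1
    rw [hmul, hmul, hHiota, hHiota, pmul_iota_right σ a hm0, pmul_iota_left σ a hm0,
      hcomm, hc] at e2
    exact e2
  have hwk : ∀ k : Fin m, (k : ℕ) ≠ 1 → H (ev K m 1) k = 0 := by
    intro k hk
    by_contra h0
    have hfix : ∀ d : K, (⇑σ)^[(k : ℕ)] d = σ d := by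
      intro d
      have h1 := congrFun (hw d) k
      rw [Pi.smul_apply, smul_eq_mul] at h1
      exact mul_left_cancel₀ h0 (h1.trans (mul_comm _ _))
    rcases Nat.lt_or_ge (k : ℕ) 1 with hk1 | hk1
    · have hk0 : (k : ℕ) = 0 := by omega
      obtain ⟨d, hd⟩ := exists_not_fixed σ hord one_ne_zero h1m
      apply hd
      have h2 := hfix d
      rw [hk0] at h2
      simp only [Function.iterate_zero, id_eq] at h2
      rw [Function.iterate_one, ← h2]
    · have hk2 : 2 ≤ (k : ℕ) := by omega
      obtain ⟨d, hd⟩ := exists_not_fixed σ hord (p := (k : ℕ) - 1) (by omega)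
        (by have := k.isLt; omega)
      apply hd
      obtain ⟨e, he⟩ := σ.surjective d
      have h3 := hfix e
      have h4 : (k : ℕ) = ((k : ℕ) - 1) + 1 := by omega
      rw [h4, Function.iterate_add_apply, Function.iterate_one, he] at h3
      exact h3
  set k₀ : K := H (ev K m 1) ⟨1, h1m⟩ with hk₀def
  have hw1 : H (ev K m 1) = k₀ • ev K m 1 := by
    funext k
    by_cases h : (k : ℕ) = 1
    · have hk : k = ⟨1, h1m⟩ := Fin.ext h
      rw [hk]
      simp [ev, hk₀def]
    · rw [hwk k h]
      simp [ev, h]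
  have ev1ne : ev K m 1 ≠ (0 : Fin m → K) := by
    intro h
    have := congrFun h ⟨1, h1m⟩
    simp [ev] at this
  have hk₀ne : k₀ ≠ 0 := by
    intro h0
    apply ev1ne
    apply hbij.1
    rw [hw1, h0, zero_smul, H0]
  -- Step C : H (t^s) = u_s t^s
  have hu : ∀ s : ℕ, s < m →
      H (ev K m s) = (∏ l ∈ Finset.range s, (⇑σ)^[l] k₀) • ev K m s := by
    intro s
    induction s with
    | zero =>
      intro _
      rw [← pone_eq_ev, hone, Finset.range_zero, Finset.prod_empty, one_smul]
    | succ p ih =>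
      intro hp
      have hpm : p < m := by omega
      have h1 : ev K m (p+1) = pmul ⇑σ a (ev K m 1) (ev K m p) := by
        rw [pmul_ev_ev σ a h1m hpm, Nat.add_comm 1 p, tred_lt _ _ hp]
      conv_lhs => rw [h1]
      rw [hmul, hw1, ih hpm, pmul_smulev_smulev σ a h1m hpm,
        tred_lt _ _ (by omega : 1 + p < m), Nat.add_comm 1 p,
        Function.iterate_one, prod_shift]
  -- Step D : the general formula for H
  have hform : ∀ x : Fin m → K,
      H x = fun i : Fin m => τ (x i) * ∏ l ∈ Finset.range (i : ℕ), (⇑σ)^[l] k₀ := by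
    intro x
    have hx : x = ∑ s : Fin m, pmul ⇑σ a (iota K m (x s)) (ev K m (s : ℕ)) := by
      have hterm : ∀ s : Fin m,
          pmul ⇑σ a (iota K m (x s)) (ev K m (s : ℕ)) = x s • ev K m (s : ℕ) :=
        fun s => pmul_iota_left σ a hm0 _ _
      simp only [hterm]
      rw [sum_smul_ev]
    conv_lhs => rw [hx]
    rw [Hsum]
    have hterm2 : ∀ s : Fin m, H (pmul ⇑σ a (iota K m (x s)) (ev K m (s : ℕ)))
        = (τ (x s) * ∏ l ∈ Finset.range (s : ℕ), (⇑σ)^[l] k₀) • ev K m (s : ℕ) := by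
      intro s
      rw [hmul, hHiota, hu (s : ℕ) s.isLt, pmul_iota_left σ a hm0, smul_smul]
    simp only [hterm2]
    exact sum_smul_ev _
  -- Step E : constraints from f
  have hEa : ∀ i : Fin m, a i * ∏ l ∈ Finset.range (i : ℕ), (⇑σ)^[l] k₀
      = (∏ l ∈ Finset.range m, (⇑σ)^[l] k₀) * a i := by
    have h1 : a = pmul ⇑σ a (ev K m 1) (ev K m (m-1)) := by
      rw [pmul_ev_ev σ a h1m (by omega), (by omega : 1 + (m-1) = m), tred_m]
    have h2 : H a = (k₀ * (⇑σ)^[1] (∏ l ∈ Finset.range (m-1), (⇑σ)^[l] k₀)) •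
        tred ⇑σ m a (1 + (m-1)) := by
      conv_lhs => rw [h1]
      rw [hmul, hw1, hu (m-1) (by omega), pmul_smulev_smulev σ a h1m (by omega)]
    rw [(by omega : 1 + (m-1) = m), tred_m, Function.iterate_one, prod_shift,
      (by omega : m - 1 + 1 = m)] at h2
    intro i
    have h3 := congrFun h2 i
    rw [Pi.smul_apply, smul_eq_mul] at h3
    have h4 := congrFun (hform a) i
    rw [hτfix (a i) (ha i)] at h4
    rw [← h4, h3]
  have hN1 : (∏ l ∈ Finset.range m, (⇑σ)^[l] k₀) = 1 := by
    have h := hEa ⟨0, hm0⟩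
    simp only [Finset.range_zero, Finset.prod_empty, mul_one] at h
    have h2 : (1 : K) * a ⟨0, hm0⟩ = (∏ l ∈ Finset.range m, (⇑σ)^[l] k₀) * a ⟨0, hm0⟩ := by
      rw [one_mul]; exact h
    exact (mul_right_cancel₀ ha0 h2).symm
  have hEi₀ : (∏ l ∈ Finset.range (i₀ : ℕ), (⇑σ)^[l] k₀) = 1 := by
    have h := hEa i₀
    rw [hN1, one_mul] at h
    have h2 : a i₀ * (∏ l ∈ Finset.range (i₀ : ℕ), (⇑σ)^[l] k₀) = a i₀ * 1 := by
      rw [mul_one]; exact h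
    exact mul_left_cancel₀ hai₀ h2
  -- Step F : k₀ = 1
  have hwin : ∀ r : ℕ, ∏ l ∈ Finset.range (i₀ : ℕ), (⇑σ)^[r + l] k₀ = 1 := by
    intro r
    have h := congrArg ((⇑σ)^[r]) hEi₀
    rw [it_one] at h
    rw [← h, ← coe_pow_eq_iterate, map_prod]
    refine Finset.prod_congr rfl fun l _ => ?_
    rw [coe_pow_eq_iterate, ← Function.iterate_add_apply]
  have hshift : ∀ r : ℕ, (⇑σ)^[r + (i₀ : ℕ)] k₀ = (⇑σ)^[r] k₀ := by
    intro r
    have h3 : (∏ l ∈ Finset.range (i₀ : ℕ), (⇑σ)^[r + l] k₀) * (⇑σ)^[r + (i₀ : ℕ)] k₀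
        = (⇑σ)^[r] k₀ * ∏ l ∈ Finset.range (i₀ : ℕ), (⇑σ)^[r + 1 + l] k₀ := by
      rw [← Finset.prod_range_succ (fun l => (⇑σ)^[r + l] k₀) (i₀ : ℕ),
        Finset.prod_range_succ', Nat.add_zero, mul_comm]
      congr 1
      refine Finset.prod_congr rfl fun l _ => ?_
      rw [show r + (l + 1) = r + 1 + l by omega]
    rw [hwin r, hwin (r+1), one_mul, mul_one] at h3
    exact h3
  have hiter : ∀ t : ℕ, (⇑σ)^[t * (i₀ : ℕ)] k₀ = k₀ := by
    intro t
    induction t with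
    | zero => simp
    | succ p ih =>
      have h := hshift (p * (i₀ : ℕ))
      rw [ih] at h
      rw [Nat.succ_mul]
      exact h
  have hcop : Nat.Coprime (i₀ : ℕ) m := by
    refine Nat.Coprime.symm ((Nat.Prime.coprime_iff_not_dvd hprime).mpr ?_)
    intro hdvd
    have := Nat.le_of_dvd (Nat.pos_of_ne_zero hi₀) hdvd
    have := i₀.isLt
    omega
  obtain ⟨t, -, ht⟩ := Nat.exists_mul_mod_eq_one_of_coprime hcop h1m
  have hfixk : σ k₀ = k₀ := by
    have h5 := hiter t
    have hdm := Nat.div_add_mod (t * (i₀ : ℕ)) m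
    rw [Nat.mul_comm t (i₀ : ℕ), ht] at hdm
    rw [Nat.mul_comm (i₀:ℕ) t] at hdm
    rw [show t * (i₀ : ℕ) = m * (t * (i₀ : ℕ) / m) + 1 from hdm.symm] at h5
    have hqm : ∀ z : K, (⇑σ)^[m * (t * (i₀ : ℕ) / m)] z = z := by
      intro z
      rw [Function.iterate_mul]
      exact Function.iterate_fixed (it_m_eq_id σ hord z) _
    rw [Function.iterate_add_apply, Function.iterate_one, hqm (σ k₀)] at h5
    exact h5
  have hpow : ∀ p : ℕ, (∏ l ∈ Finset.range p, (⇑σ)^[l] k₀) = k₀ ^ p := by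
    intro p
    rw [Finset.prod_congr rfl fun l _ => Function.iterate_fixed hfixk l,
      Finset.prod_const, Finset.card_range]
  have hk1 : k₀ = 1 := by
    have e1 : k₀ ^ (i₀ : ℕ) = 1 := by rw [← hpow]; exact hEi₀
    have e2 : k₀ ^ m = 1 := by rw [← hpow]; exact hN1
    have d1 := orderOf_dvd_of_pow_eq_one e1
    have d2 := orderOf_dvd_of_pow_eq_one e2
    have d3 := Nat.dvd_gcd d1 d2
    rw [Nat.Coprime] at hcop
    rw [hcop] at d3
    exact orderOf_eq_one_iff.mp (Nat.dvd_one.mp d3)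
  refine ⟨j, ?_⟩
  funext x
  rw [hform x]
  funext i
  rw [hk1, hτj]
  rfl

end Aux5
section Aux6
variable {F K : Type*} [Field F] [Field K] [Algebra F K]
variable (σ : K ≃ₐ[F] K) (m : ℕ)

theorem Hcomp (j r : ℕ) :
    (Hmap (⇑σ) (⇑(σ ^ j)) (1 : K) : (Fin m → K) → Fin m → K) ∘
      Hmap (⇑σ) (⇑(σ ^ r)) (1 : K) = Hmap (⇑σ) (⇑(σ ^ (j + r))) (1 : K) := by
  rw [Hmap_one, Hmap_one, Hmap_one]
  funext x i
  simp only [Function.comp_apply]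
  rw [pow_add, AlgEquiv.mul_apply]

theorem Hiter (p : ℕ) :
    ((Hmap (⇑σ) (⇑σ) (1 : K) : (Fin m → K) → Fin m → K))^[p]
      = Hmap (⇑σ) (⇑(σ ^ p)) (1 : K) := by
  induction p with
  | zero =>
    rw [Function.iterate_zero, Hmap_one]
    funext x i
    simp
  | succ p ih =>
    rw [Function.iterate_succ', ih]
    have h1 : (Hmap (⇑σ) (⇑σ) (1 : K) : (Fin m → K) → Fin m → K)
        = Hmap (⇑σ) (⇑(σ ^ 1)) (1 : K) := by rw [pow_one]
    rw [h1, Hcomp σ m 1 p, Nat.add_comm 1 p]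

end Aux6

theorem stmt15' {F K : Type*} [Field F] [Field K] [Algebra F K]
    [FiniteDimensional F K] [IsGalois F K]
    (σ : K ≃ₐ[F] K) (n : ℕ) (hn : orderOf σ = n)
    (hgen : ∀ τ : K ≃ₐ[F] K, ∃ j : ℕ, τ = σ ^ j)
    (m : ℕ) (hm : 2 ≤ m) (a : Fin m → K)
    (haF : ∀ i : Fin m, a i ∈ Set.range (algebraMap F K))
    (hna : ¬ PAssoc (⇑σ) a) :
    (∀ j : ℕ, IsPetitAut (⇑σ) a (Hmap (⇑σ) (⇑(σ ^ j)) (1 : K)))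
    ∧ (∀ j r : ℕ,
        (Hmap (⇑σ) (⇑(σ ^ j)) (1 : K) : (Fin m → K) → Fin m → K) ∘
          Hmap (⇑σ) (⇑(σ ^ r)) (1 : K)
          = Hmap (⇑σ) (⇑(σ ^ (j + r))) (1 : K))
    ∧ ((Hmap (⇑σ) (⇑σ) (1 : K) : (Fin m → K) → Fin m → K)^[n] = id)
    ∧ (∀ j : ℕ, 0 < j → j < n →
        (Hmap (⇑σ) (⇑σ) (1 : K) : (Fin m → K) → Fin m → K)^[j] ≠ id)
    ∧ ((n = m ∧ Nat.Prime m ∧ a ⟨0, Nat.lt_of_lt_of_le Nat.zero_lt_two hm⟩ ≠ 0 ∧ ∃ i : Fin m, (i : ℕ) ≠ 0 ∧ a i ≠ 0) →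
        ∀ H : (Fin m → K) → (Fin m → K),
          IsPetitAut (⇑σ) a H ↔ ∃ j : ℕ, H = Hmap (⇑σ) (⇑(σ ^ j)) (1 : K)) := by
  have ha : ∀ i : Fin m, σ (a i) = a i := by
    intro i
    obtain ⟨r, hr⟩ := haF i
    rw [← hr]
    exact σ.commutes r
  refine ⟨fun j => part1 σ a ha j, fun j r => Hcomp σ m j r, ?_, ?_, ?_⟩
  · rw [Hiter σ m n, ← hn, pow_orderOf_eq_one, Hmap_one]
    funext x i
    simp
  · intro p hp0 hpn heq
    rw [Hiter σ m p, Hmap_one] at heq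
    have hpow1 : σ ^ p = 1 := by
      ext c
      have h2 := congrFun (congrFun heq (fun _ : Fin m => c)) ⟨0, by omega⟩
      simpa using h2
    have hdvd := orderOf_dvd_of_pow_eq_one hpow1
    rw [hn] at hdvd
    have := Nat.le_of_dvd hp0 hdvd
    omega
  · rintro ⟨hnm, hprime, ha0, i₀, hi₀, hai₀⟩ H
    constructor
    · intro hH
      exact classify σ a hm ha (hn.trans hnm) hprime hgen ha0 i₀ hi₀ hai₀ H hH
    · rintro ⟨j, rfl⟩
      exact part1 σ a ha j

/-- **Theorem 5.3.** Let `K/F` be cyclic Galois with `Gal(K/F) = ⟨σ⟩` of order `n`,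
and let `f(t) = t^m − Σ_{i<m} a_i t^i ∈ F[t;σ]` (all coefficients in `F`) be not
invariant (equivalently `S_f` not associative).
(i) `⟨H_{σ,1}⟩ = {H_{σ^j,1}}` is a cyclic subgroup of `Aut_F(S_f)` isomorphic to
`ℤ/nℤ`.
(ii) If `n = m` is prime, `a₀ ≠ 0`, and some `a_i ≠ 0` with `i ≠ 0`, then
`Aut_F(S_f) = ⟨H_{σ,1}⟩ ≅ ℤ/mℤ`. -/
theorem stmt15 {F K : Type*} [Field F] [Field K] [Algebra F K]
    [FiniteDimensional F K] [IsGalois F K]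
    (σ : K ≃ₐ[F] K) (n : ℕ) (hn : orderOf σ = n)
    (hgen : ∀ τ : K ≃ₐ[F] K, ∃ j : ℕ, τ = σ ^ j)
    (m : ℕ) (hm : 2 ≤ m) (a : Fin m → K)
    (haF : ∀ i : Fin m, a i ∈ Set.range (algebraMap F K))
    (hna : ¬ PAssoc (⇑σ) a) :
    (∀ j : ℕ, IsPetitAut (⇑σ) a (Hmap (⇑σ) (⇑(σ ^ j)) (1 : K)))
    ∧ (∀ j r : ℕ,
        (Hmap (⇑σ) (⇑(σ ^ j)) (1 : K) : (Fin m → K) → Fin m → K) ∘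
          Hmap (⇑σ) (⇑(σ ^ r)) (1 : K)
          = Hmap (⇑σ) (⇑(σ ^ (j + r))) (1 : K))
    ∧ ((Hmap (⇑σ) (⇑σ) (1 : K) : (Fin m → K) → Fin m → K)^[n] = id)
    ∧ (∀ j : ℕ, 0 < j → j < n →
        (Hmap (⇑σ) (⇑σ) (1 : K) : (Fin m → K) → Fin m → K)^[j] ≠ id)
    ∧ ((n = m ∧ Nat.Prime m ∧ a ⟨0, by omega⟩ ≠ 0 ∧ ∃ i : Fin m, (i : ℕ) ≠ 0 ∧ a i ≠ 0) →
        ∀ H : (Fin m → K) → (Fin m → K),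
          IsPetitAut (⇑σ) a H ↔ ∃ j : ℕ, H = Hmap (⇑σ) (⇑(σ ^ j)) (1 : K)) := by
  exact stmt15' σ n hn hgen m hm a haF hna
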